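/- Let C ⊆ (F_p + u²F_p)ⁿ ⊆ Rⁿ be a linear code (all codewords have zero coefficient of u). If C is self-orthogonal (C ⊆ C^⊥), then its Gray image Φ(C) is a self-orthogonal code in F_p^{2n}. -/
import Mathlib

open Polynomial

abbrev Rp (p : ℕ) := AdjoinRoot (X ^ 3 - X : (ZMod p)[X])
noncomputable def uu (p : ℕ) : Rp p := AdjoinRoot.root _
noncomputable def am (p : ℕ) : ZMod p →+* Rp p := algebraMap (ZMod p) (Rp p)

noncomputable def enc (p n : ℕ) (a b c : Fin n → ZMod p) : Fin n → Rp p :=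
  fun i => am p (a i) + am p (b i) * uu p + am p (c i) * uu p ^ 2

def grayOut (p n : ℕ) (a c : Fin n → ZMod p) : Fin (2 * n) → ZMod p :=
  fun j =>
    if h : (j : ℕ) < n then - c ⟨j, h⟩
    else 2 * a ⟨(j : ℕ) - n, by have := j.isLt; omega⟩ +
      c ⟨(j : ℕ) - n, by have := j.isLt; omega⟩

/-- The Euclidean dual of a code over `R`. -/
noncomputable def dualR (p n : ℕ) (C : Set (Fin n → Rp p)) : Set (Fin n → Rp p) :=
  {x | ∀ y ∈ C, ∑ i, x i * y i = 0}

/-- The Euclidean dual of a code over `F_p`. -/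
def dualF (p m : ℕ) (C : Set (Fin m → ZMod p)) : Set (Fin m → ZMod p) :=
  {x | ∀ y ∈ C, ∑ i, x i * y i = 0}

lemma uu_cube (p : ℕ) : uu p ^ 3 = uu p := by
  have h := AdjoinRoot.mk_self (f := (X ^ 3 - X : (ZMod p)[X]))
  rw [map_sub, map_pow, AdjoinRoot.mk_X, sub_eq_zero] at h
  exact h

lemma indep (p : ℕ) [Fact p.Prime] (A B : ZMod p)
    (h : am p A + am p B * uu p ^ 2 = 0) : A = 0 ∧ B = 0 := by
  have hmk : am p A + am p B * uu p ^ 2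
      = AdjoinRoot.mk (X ^ 3 - X : (ZMod p)[X]) (C A + C B * X ^ 2) := by
    rw [map_add, map_mul, map_pow, AdjoinRoot.mk_X, AdjoinRoot.mk_C, AdjoinRoot.mk_C]
    rw [am, uu, AdjoinRoot.algebraMap_eq]
  rw [hmk, AdjoinRoot.mk_eq_zero] at h
  have hdeg : (C A + C B * X ^ 2 : (ZMod p)[X]).degree < (X ^ 3 - X : (ZMod p)[X]).degree := by
    have h3 : (X ^ 3 - X : (ZMod p)[X]).degree = 3 := by
      rw [degree_sub_eq_left_of_degree_lt]
      · exact degree_X_pow 3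
      · rw [degree_X_pow, degree_X]; norm_num
    rw [h3]
    refine lt_of_le_of_lt (degree_add_le _ _) ?_
    refine max_lt (lt_of_le_of_lt degree_C_le (by norm_num)) ?_
    refine lt_of_le_of_lt (degree_mul_le _ _) ?_
    refine lt_of_le_of_lt (add_le_add degree_C_le (le_of_eq (degree_X_pow 2))) ?_
    norm_num
  have hz := Polynomial.eq_zero_of_dvd_of_degree_lt h hdeg
  constructor
  · have := congrArg (fun q => Polynomial.coeff q 0) hz
    simpa using this
  · have := congrArg (fun q => Polynomial.coeff q 2) hz
    simpa using this

theorem gray_image_self_orthogonal (p n : ℕ) [Fact p.Prime] (hp : p ≠ 2)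
    (C : Submodule (Rp p) (Fin n → Rp p))
    (hsub : ∀ r ∈ C, ∀ i : Fin n, ∃ a c : ZMod p, r i = am p a + am p c * uu p ^ 2)
    (hso : (C : Set (Fin n → Rp p)) ⊆ dualR p n C)
    (Φ : (Fin n → Rp p) → Fin (2 * n) → ZMod p)
    (hΦ : ∀ a b c : Fin n → ZMod p, Φ (enc p n a b c) = grayOut p n a c) :
    Φ '' (C : Set (Fin n → Rp p)) ⊆ dualF p (2 * n) (Φ '' (C : Set (Fin n → Rp p))) := by
  rintro _ ⟨r, hr, rfl⟩ _ ⟨s, hs, rfl⟩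
  choose a c hac using hsub r hr
  choose a' c' hac' using hsub s hs
  have hΦr : Φ r = grayOut p n a c := by
    have : r = enc p n a 0 c := funext fun i => by simp [enc, hac i]
    rw [this, hΦ]
  have hΦs : Φ s = grayOut p n a' c' := by
    have : s = enc p n a' 0 c' := funext fun i => by simp [enc, hac' i]
    rw [this, hΦ]
  -- R-side inner product
  have h0 : ∑ i, r i * s i = 0 := hso hr s hs
  have hterm : ∀ i : Fin n, r i * s i
      = am p (a i * a' i) + am p (a i * c' i + c i * a' i + c i * c' i) * uu p ^ 2 := by
    intro i
    rw [hac i, hac' i]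
    simp only [map_add, map_mul]
    linear_combination (am p (c i) * am p (c' i) * uu p) * uu_cube p
  have hsum : am p (∑ i, a i * a' i)
      + am p (∑ i, (a i * c' i + c i * a' i + c i * c' i)) * uu p ^ 2 = 0 := by
    rw [map_sum, map_sum, Finset.sum_mul, ← Finset.sum_add_distrib, ← h0]
    exact Finset.sum_congr rfl fun i _ => (hterm i).symm
  obtain ⟨hA, hB⟩ := indep p _ _ hsum
  -- F-side inner product
  rw [hΦr, hΦs]
  have hsplit : ∑ j : Fin (2 * n), grayOut p n a c j * grayOut p n a' c' j
      = ∑ i : Fin n, (-c i) * (-c' i)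
        + ∑ i : Fin n, (2 * a i + c i) * (2 * a' i + c' i) := by
    rw [← Equiv.sum_comp (finCongr (two_mul n).symm)
      (fun j => grayOut p n a c j * grayOut p n a' c' j), Fin.sum_univ_add]
    congr 1
    · refine Finset.sum_congr rfl fun i _ => ?_
      simp [grayOut, i.isLt]
    · refine Finset.sum_congr rfl fun i _ => ?_
      have h1 : ¬ (n + (i : ℕ) < n) := by omega
      simp [grayOut, h1]
  rw [hsplit]
  have key : ∑ i : Fin n, ((-c i) * (-c' i) + (2 * a i + c i) * (2 * a' i + c' i))
      = 4 * ∑ i, a i * a' i + 2 * ∑ i, (a i * c' i + c i * a' i + c i * c' i) := by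
    rw [Finset.mul_sum, Finset.mul_sum, ← Finset.sum_add_distrib]
    exact Finset.sum_congr rfl fun i _ => by ring
  rw [← Finset.sum_add_distrib, key, hA, hB]
  ring
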